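/- Let k be a field containing a primitive n-th root of unity, where n is invertible in k. Let c ∈ k^× and let m be the order of the image of c in the quotient group k^×/(k^×)^n. Then the polynomial T^n − c factors in k[T] as the product of n/m irreducible factors, each of degree m; explicitly, T^n − c = ∏_{g} (T^m − g), where g ranges over the n/m elements of k^× satisfying g^{n/m} = c. -/

import Mathlib

/-!
Write `n = m * d`. Since `c ^ m = b ^ n`, the quotient `c / b ^ d` is an `m`-th root of unity, hence
a `d`-th power of a power of `ζ`; so `c` has a `d`-th root, and as `ζ ^ m` is a primitive `d`-th
root of unity, `T ^ d - c` is the product of the `d` distinct `T - g`. Substituting `T ^ m` gives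
the factorization. If `q` is an irreducible factor of `T ^ m - g` of degree `r` and `α` a root of
`q`, then `N(α) ^ n = N(α ^ n) = c ^ r`, so the class of `c` has order dividing `r ≤ m`, forcing
`r = m`.
-/

open Polynomial

theorem QuotientGroup.orderOf_mk_range_powMonoidHom_dvd_iff {G : Type*} [CommGroup G] (n : ℕ)
    (x : G) (r : ℕ) :
    orderOf (QuotientGroup.mk x : G ⧸ (powMonoidHom n : G →* G).range) ∣ r ↔
      ∃ y : G, y ^ n = x ^ r := by
  rw [orderOf_dvd_iff_pow_eq_one, ← QuotientGroup.mk_pow, QuotientGroup.eq_one_iff]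
  rfl

section Field

variable {K : Type*} [Field K]

theorem Units.orderOf_mk_range_powMonoidHom_dvd_iff {n : ℕ} (hn : n ≠ 0) (c : Kˣ) (r : ℕ) :
    orderOf (QuotientGroup.mk c : Kˣ ⧸ (powMonoidHom n : Kˣ →* Kˣ).range) ∣ r ↔
      ∃ w : K, w ^ n = c ^ r := by
  rw [QuotientGroup.orderOf_mk_range_powMonoidHom_dvd_iff]
  constructor
  · rintro ⟨y, hy⟩
    exact ⟨y, by exact_mod_cast congrArg Units.val hy⟩
  · rintro ⟨w, hw⟩
    have hw0 : w ≠ 0 := by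
      rintro rfl
      exact pow_ne_zero r c.ne_zero (by rw [← hw, zero_pow hn])
    exact ⟨Units.mk0 w hw0, Units.ext (by simpa using hw)⟩

theorem IsPrimitiveRoot.exists_pow_eq_of_pow_mul_eq_pow {ζ a b : K} {m d : ℕ}
    (hζ : IsPrimitiveRoot ζ (m * d)) (hmd : 0 < m * d) (ha : a ≠ 0)
    (h : b ^ (m * d) = a ^ m) : ∃ g : K, g ^ d = a := by
  have : NeZero m := ⟨left_ne_zero_of_mul hmd.ne'⟩
  have hb : b ≠ 0 := by
    rintro rfl
    exact pow_ne_zero m ha (by rw [← h, zero_pow hmd.ne'])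
  have hε : (a / b ^ d) ^ m = 1 := by
    rw [div_pow, ← pow_mul, mul_comm, ← h, div_self (pow_ne_zero _ hb)]
  obtain ⟨i, -, hi⟩ := (hζ.pow hmd (mul_comm m d)).eq_pow_of_pow_eq_one hε
  refine ⟨ζ ^ i * b, ?_⟩
  rw [mul_pow, ← pow_mul, mul_comm i, pow_mul, hi, div_mul_cancel₀ _ (pow_ne_zero _ hb)]

theorem Polynomial.exists_pow_eq_pow_natDegree_of_irreducible_dvd {q : K[X]} (hq : Irreducible q)
    {n : ℕ} {a : K} (hdvd : q ∣ X ^ n - C a) :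
    ∃ w : K, w ^ n = a ^ q.natDegree := by
  have : Fact (Irreducible q) := ⟨hq⟩
  refine ⟨Algebra.norm K (AdjoinRoot.root q), ?_⟩
  have hroot := eval₂_eq_zero_of_dvd_of_eval₂_eq_zero _ _ hdvd (AdjoinRoot.eval₂_root q)
  rw [eval₂_sub, eval₂_pow, eval₂_C, eval₂_X, sub_eq_zero] at hroot
  rw [← map_pow, hroot, ← AdjoinRoot.algebraMap_eq, Algebra.norm_algebraMap,
    (AdjoinRoot.powerBasis hq.ne_zero).finrank, AdjoinRoot.powerBasis_dim]

theorem Polynomial.X_pow_sub_C_irreducible_of_dvd {m n : ℕ} {g a : K}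
    (hm : m ≠ 0) (hdvd : X ^ m - C g ∣ X ^ n - C a)
    (h : ∀ r (w : K), w ^ n = a ^ r → m ∣ r) :
    Irreducible (X ^ m - C g) := by
  have hne : X ^ m - C g ≠ 0 := X_pow_sub_C_ne_zero (Nat.pos_of_ne_zero hm) g
  have hunit : ¬IsUnit (X ^ m - C g) :=
    not_isUnit_of_natDegree_pos _ (by rw [natDegree_X_pow_sub_C]; exact Nat.pos_of_ne_zero hm)
  obtain ⟨q, hq, hqdvd⟩ := WfDvdMonoid.exists_irreducible_factor hunit hne
  obtain ⟨w, hw⟩ := exists_pow_eq_pow_natDegree_of_irreducible_dvd hq (hqdvd.trans hdvd)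
  have hle : q.natDegree ≤ m :=
    natDegree_X_pow_sub_C (n := m) (r := g) ▸ natDegree_le_of_dvd hqdvd hne
  have hqm : q.natDegree = m := hle.antisymm (Nat.le_of_dvd hq.natDegree_pos (h _ w hw))
  have hassoc : Associated q (X ^ m - C g) :=
    associated_of_dvd_of_natDegree_le hqdvd hne (by rw [hqm, natDegree_X_pow_sub_C])
  exact hassoc.irreducible hq

theorem IsPrimitiveRoot.card_nthRootsFinset_of_pow_eq {ζ a α : K} {n : ℕ}
    (hζ : IsPrimitiveRoot ζ n) (ha : a ≠ 0) (hα : α ^ n = a) :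
    (nthRootsFinset n a).card = n := by
  classical
  rw [nthRootsFinset_def, Multiset.toFinset_card_of_nodup (hζ.nthRoots_nodup ha),
    hζ.card_nthRoots, if_pos ⟨α, hα⟩]

theorem IsPrimitiveRoot.X_pow_sub_C_eq_prod_X_sub_C_nthRootsFinset {ζ a α : K} {n : ℕ}
    (hζ : IsPrimitiveRoot ζ n) (hn : n ≠ 0) (ha : a ≠ 0) (hα : α ^ n = a) :
    X ^ n - C a = ∏ g ∈ nthRootsFinset n a, (X - C g) := by
  classical
  rw [(X_pow_sub_C_splits_of_isPrimitiveRoot hζ hα).eq_prod_roots_of_monic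
    (monic_X_pow_sub_C a hn), nthRootsFinset_def, Finset.prod_eq_multiset_prod,
    Multiset.toFinset_val, Multiset.dedup_eq_self.mpr (hζ.nthRoots_nodup ha)]
  rfl

theorem IsPrimitiveRoot.X_pow_mul_sub_C_eq_prod_nthRootsFinset {ζ a α : K} {n : ℕ} (m : ℕ)
    (hζ : IsPrimitiveRoot ζ n) (hn : n ≠ 0) (ha : a ≠ 0) (hα : α ^ n = a) :
    X ^ (m * n) - C a = ∏ g ∈ nthRootsFinset n a, (X ^ m - C g) := by
  simpa only [sub_comp, pow_comp, X_comp, C_comp, prod_comp, ← pow_mul] using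
    congrArg (·.comp (X ^ m)) (hζ.X_pow_sub_C_eq_prod_X_sub_C_nthRootsFinset hn ha hα)

end Field

theorem kummer_factorization_general {k : Type*} [Field k] (n : ℕ) (hn : 0 < n)
    (ζ : k) (hζ : IsPrimitiveRoot ζ n) (c : kˣ) (m : ℕ)
    (hm : m = orderOf (QuotientGroup.mk c : kˣ ⧸ (powMonoidHom n : kˣ →* kˣ).range)) :
    ∃ S : Finset k, S.card = n / m ∧
      (∀ g : k, g ∈ S ↔ g ^ (n / m) = (c : k)) ∧
      (X ^ n - C (c : k) : k[X]) = ∏ g ∈ S, (X ^ m - C g) ∧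
      ∀ g ∈ S, Irreducible (X ^ m - C g : k[X]) := by
  have hdvd_iff (r : ℕ) : m ∣ r ↔ ∃ w : k, w ^ n = c ^ r :=
    hm ▸ Units.orderOf_mk_range_powMonoidHom_dvd_iff hn.ne' c r
  obtain ⟨d, rfl⟩ : m ∣ n := (hdvd_iff n).2 ⟨c, rfl⟩
  have hm0 : m ≠ 0 := left_ne_zero_of_mul hn.ne'
  have hd0 : d ≠ 0 := right_ne_zero_of_mul hn.ne'
  rw [Nat.mul_div_cancel_left d (Nat.pos_of_ne_zero hm0)]
  obtain ⟨b, hb⟩ := (hdvd_iff m).1 dvd_rfl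
  obtain ⟨g₀, hg₀⟩ := hζ.exists_pow_eq_of_pow_mul_eq_pow hn c.ne_zero hb
  have hζd : IsPrimitiveRoot (ζ ^ m) d := hζ.pow hn rfl
  have hprod := hζd.X_pow_mul_sub_C_eq_prod_nthRootsFinset m hd0 c.ne_zero hg₀
  refine ⟨nthRootsFinset d (c : k), hζd.card_nthRootsFinset_of_pow_eq c.ne_zero hg₀,
    fun g => mem_nthRootsFinset (Nat.pos_of_ne_zero hd0) _, hprod, fun g hg => ?_⟩
  exact X_pow_sub_C_irreducible_of_dvd hm0 (hprod ▸ Finset.dvd_prod_of_mem _ hg)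
    fun r w hw => (hdvd_iff r).2 ⟨w, hw⟩

/-- Kummer factorization: if `k` contains a primitive `n`-th root of unity and `c ∈ kˣ`
has image of order `m` in `kˣ/(kˣ)ⁿ`, then `T^n - c` is the product of the `n/m`
irreducible factors `T^m - g`, where `g` ranges over the elements with `g^(n/m) = c`. -/
theorem kummer_factorization {k : Type*} [Field k] (n : ℕ) (hn : 0 < n)
    (hn' : (n : k) ≠ 0) (ζ : k) (hζ : IsPrimitiveRoot ζ n) (c : kˣ) (m : ℕ)
    (hm : m = orderOf (QuotientGroup.mk c : kˣ ⧸ (powMonoidHom n : kˣ →* kˣ).range)) :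
    ∃ S : Finset k, S.card = n / m ∧
      (∀ g : k, g ∈ S ↔ g ^ (n / m) = (c : k)) ∧
      (X ^ n - C (c : k) : k[X]) = ∏ g ∈ S, (X ^ m - C g) ∧
      ∀ g ∈ S, Irreducible (X ^ m - C g : k[X]) :=
  kummer_factorization_general n hn ζ hζ c m hm
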